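/- For the configuration P = (−8,2), Q = (3,7), A = (−5,5), B = (5/3, 25/3) on the taxicab circle of radius 10 centered at the origin: A and B lie on the circle, A lies on the edge from (0,10) to (−10,0) and B lies on the edge from (0,10) to (10,0), and if M is the midpoint of PQ, CD is the chord through M with C = (1,9), X = AB ∩ PQ and Y = CD ∩ PQ, then M ≠ midpoint of XY. -/
import Mathlib

private lemma mem_line_iff' {p₁ p₂ x : ℝ × ℝ} :
    x ∈ affineSpan ℝ ({p₁, p₂} : Set (ℝ × ℝ)) ↔ ∃ r : ℝ, r • (p₂ - p₁) = x - p₁ := by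
  conv_lhs => rw [show x = (x - p₁) +ᵥ p₁ from by simp]
  exact vadd_left_mem_affineSpan_pair

/-- Concrete counterexample (Table 1, row 1): for `P = (-8,2)`, `Q = (3,7)`,
`A = (-5,5)`, `B = (5/3, 25/3)` on the taxicab circle of radius `10`: `A` and `B` lie on
the circle and on its edges from `(0,10)` to `(-10,0)` and from `(0,10)` to `(10,0)`
respectively, and for `M` the midpoint of `PQ` and any chord `CD` through `M` with
`C = (1,9)`, letting `X` be on `line AB ∩ line PQ` and `Y` on `line CD ∩ line PQ`, the
midpoint of `XY` differs from `M`. -/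
theorem taxicab_butterfly_counterexample :
    let P : ℝ × ℝ := (-8, 2)
    let Q : ℝ × ℝ := (3, 7)
    let A : ℝ × ℝ := (-5, 5)
    let B : ℝ × ℝ := (5/3, 25/3)
    let C : ℝ × ℝ := (1, 9)
    let M := midpoint ℝ P Q
    (|A.1| + |A.2| = 10) ∧ (|B.1| + |B.2| = 10) ∧
    A ∈ segment ℝ ((0, 10) : ℝ × ℝ) (-10, 0) ∧
    B ∈ segment ℝ ((0, 10) : ℝ × ℝ) (10, 0) ∧
    ∀ D X Y : ℝ × ℝ, |D.1| + |D.2| = 10 → D ≠ C →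
      M ∈ affineSpan ℝ ({C, D} : Set (ℝ × ℝ)) →
      X ∈ affineSpan ℝ ({A, B} : Set (ℝ × ℝ)) →
      X ∈ affineSpan ℝ ({P, Q} : Set (ℝ × ℝ)) →
      Y ∈ affineSpan ℝ ({C, D} : Set (ℝ × ℝ)) →
      Y ∈ affineSpan ℝ ({P, Q} : Set (ℝ × ℝ)) →
      midpoint ℝ X Y ≠ M := by
  intro P Q A B C M
  have hM : M = ((-5/2 : ℝ), (9/2 : ℝ)) := by
    simp [M, midpoint_eq_smul_add, Prod.ext_iff, P, Q]
    norm_num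
  refine ⟨by norm_num [A], ?_, ?_, ?_, ?_⟩
  · show |(5/3 : ℝ)| + |(25/3 : ℝ)| = 10
    rw [abs_of_pos (by norm_num), abs_of_pos (by norm_num)]; norm_num
  · refine ⟨1/2, 1/2, by norm_num, by norm_num, by norm_num, ?_⟩
    simp [A, Prod.ext_iff]; norm_num
  · refine ⟨5/6, 1/6, by norm_num, by norm_num, by norm_num, ?_⟩
    simp [B, Prod.ext_iff]; norm_num
  · intro D X Y hD hDC hMCD hXAB hXPQ hYCD hYPQ
    rw [mem_line_iff'] at hMCD hXAB hXPQ hYCD hYPQ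
    obtain ⟨t, ht⟩ := hMCD
    obtain ⟨a, ha⟩ := hXAB
    obtain ⟨b, hb⟩ := hXPQ
    obtain ⟨u, hu⟩ := hYCD
    obtain ⟨v, hv⟩ := hYPQ
    rw [hM] at ht
    simp only [Prod.smul_mk, Prod.mk_sub_mk, Prod.mk_add_mk, Prod.ext_iff, Prod.smul_def,
      Prod.fst_sub, Prod.snd_sub, Prod.fst_add, Prod.snd_add, smul_eq_mul,
      C, P, Q, A, B] at ht ha hb hu hv
    -- derive the linear relation on D from M ∈ line CD
    have ht1 : t * (D.1 - 1) = -7/2 := by linarith [ht.1]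
    have ht2 : t * (D.2 - 9) = -9/2 := by linarith [ht.2]
    have hlin : 9 * D.1 - 7 * D.2 + 54 = 0 := by
      have htne : t ≠ 0 := by
        intro h; rw [h] at ht1; norm_num at ht1
      have h9 : 9 * (t * (D.1 - 1)) = 7 * (t * (D.2 - 9)) := by
        rw [ht1, ht2]; ring
      have : t * (9 * D.1 - 7 * D.2 + 54) = 0 := by ring_nf; ring_nf at h9; linarith
      have := mul_eq_zero.mp this
      tauto
    -- determine D = (-31/4, -9/4)
    have hD1 : D.1 = -31/4 ∧ D.2 = -9/4 := by
      rcases abs_cases D.1 with ⟨e1, s1⟩ | ⟨e1, s1⟩ <;>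
        rcases abs_cases D.2 with ⟨e2, s2⟩ | ⟨e2, s2⟩ <;>
        rw [e1, e2] at hD
      · exact absurd (Prod.ext_iff.mpr ⟨show D.1 = 1 by linarith, show D.2 = 9 by linarith⟩) hDC
      · constructor <;> linarith
      · constructor <;> linarith
      · constructor <;> linarith
    obtain ⟨hD1, hD2⟩ := hD1
    rw [hD1, hD2] at hu
    obtain ⟨hu1, hu2⟩ := hu
    obtain ⟨hv1, hv2⟩ := hv
    -- solve: v = 1/2, hence Y = M
    have hv' : v = 1/2 := by linarith
    subst hv'
    have hY1 : Y.1 = -5/2 := by linarith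
    have hY2 : Y.2 = 9/2 := by linarith
    -- solve: b = -3, hence X = (-41, -13)
    obtain ⟨ha1, ha2⟩ := ha
    obtain ⟨hb1, hb2⟩ := hb
    have hb' : b = -3 := by linarith
    subst hb'
    have hX1 : X.1 = -41 := by linarith
    have hX2 : X.2 = -13 := by linarith
    intro hcon
    rw [hM] at hcon
    have := congrArg Prod.fst hcon
    simp [midpoint_eq_smul_add, Prod.smul_def, hX1, hY1] at this
    norm_num at this
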